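/- Let V be a finite set of nodes partitioned into a perimeter P and its complement O. Suppose the value vector v ∈ ℝ^V satisfies the structural identity v = b + O v, where b ∈ ℝ^V is the vector of external (non-equity) assets and O ∈ ℝ^{V×V} is the ownership matrix. Define the consolidated value W(P) = 1_P^⊤ v_P − 1_P^⊤ O_{PP} v_P − 1_O^⊤ O_{OP} v_P (internal value minus intra-perimeter holdings minus external minorities). Then W(P) = Σ_{j∈P} b_j + Σ_{i∈P,k∈O} O_{ik} v_k − Σ_{i∈O,j∈P} O_{ij} v_j; in particular W(P) does not depend on the internal block O_{PP}. -/
import Mathlib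


/-- **Cut Theorem (Cut-Based Consolidation).**
Let `V` be a finite node set, `P ⊆ V` a perimeter with complement `Pᶜ`,
`O` the ownership matrix, `b` the external-asset vector and `v` the value vector
satisfying the structural identity `v = b + O v`.  The consolidated value
`W(P) = 1_P^⊤ v_P − 1_P^⊤ O_{PP} v_P − 1_O^⊤ O_{OP} v_P` equals
`Σ_{j∈P} b_j + Σ_{i∈P,k∈O} O_{ik} v_k − Σ_{i∈O,j∈P} O_{ij} v_j`;
in particular it does not depend on the internal block `O_{PP}`. -/
theorem cut_based_consolidation {V : Type*} [Fintype V] [DecidableEq V]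
    (P : Finset V) (O : Matrix V V ℝ) (b v : V → ℝ)
    (hstruct : ∀ i, v i = b i + ∑ j, O i j * v j) :
    ((∑ i ∈ P, v i) - (∑ i ∈ P, ∑ j ∈ P, O i j * v j)
        - (∑ i ∈ Pᶜ, ∑ j ∈ P, O i j * v j))
      = (∑ j ∈ P, b j) + (∑ i ∈ P, ∑ k ∈ Pᶜ, O i k * v k)
        - (∑ i ∈ Pᶜ, ∑ j ∈ P, O i j * v j) := by
  have h : ∑ i ∈ P, v i = ∑ i ∈ P, b i + (∑ i ∈ P, ∑ j ∈ P, O i j * v j + ∑ i ∈ P, ∑ j ∈ Pᶜ, O i j * v j) := by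
    rw [← Finset.sum_add_distrib, ← Finset.sum_add_distrib]
    refine Finset.sum_congr rfl fun i _ => ?_
    rw [hstruct i, Finset.sum_add_sum_compl P (fun j => O i j * v j)]
  rw [h]; ring
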